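/- arXiv:2305.07885 — 3 statements merged into one kernel-verified Lean document; each statement's English description precedes it below -/
import Mathlib

section
/- For every symmetric 3-tensor T on ℝ^p it holds E[T(γ)²] = 6‖T‖_Fr² + 9‖M‖², where γ is a standard Gaussian vector and ‖·‖ is the Euclidean norm on ℝ^p. -/
open MeasureTheory ProbabilityTheory Finset

/-!
Expanding the square, `E[T(γ)²] = ∑ T i j k * T l m n * E[γ i γ j γ k γ l γ m γ n]`. Moments
of Gaussian monomials satisfy the Wick recursion
`E[γ a * ∏ t, γ (w t)] = ∑ t, δ(a, w t) * E[∏ s ≠ t, γ (w s)]`, which comes from the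
one-dimensional recursion `E[x ^ (n + 2)] = (n + 1) * E[x ^ n]`, itself read off from the moment
generating function `exp (t ^ 2 / 2)`. Pairing the index `i` with each of the five others, the
symmetry of `T` leaves two pairings inside the first factor, worth `3 ‖M‖²` each, and three
pairings across the factors, worth `‖M‖² + 2 ‖T‖²` each.
-/

noncomputable def stdGaussianMoment (n : ℕ) : ℝ := ∫ x, x ^ n ∂gaussianReal 0 1

lemma integrable_pow_gaussianReal (μ : ℝ) (v : NNReal) (n : ℕ) :
    Integrable (fun x : ℝ => x ^ n) (gaussianReal μ v) :=
  (memLp_id_gaussianReal (μ := μ) (v := v) n).integrable_norm_pow'.mono' (by fun_prop)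
    (ae_of_all _ fun x => by simp)

lemma iteratedDeriv_exp_sq_div_two_zero (n : ℕ) :
    iteratedDeriv n (fun t : ℝ => Real.exp (t ^ 2 / 2)) 0 = stdGaussianMoment n := by
  simpa [mgf_fun_id_gaussianReal, stdGaussianMoment] using
    iteratedDeriv_mgf_zero (X := fun x : ℝ => x) (μ := gaussianReal 0 1) (by simp) n

lemma stdGaussianMoment_add_two (n : ℕ) :
    stdGaussianMoment (n + 2) = (n + 1) * stdGaussianMoment n := by
  have hderiv :
      deriv (fun t : ℝ => Real.exp (t ^ 2 / 2)) = fun t => t * Real.exp (t ^ 2 / 2) := by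
    ext t
    rw [_root_.deriv_exp (by fun_prop)]
    simp only [deriv_div_const, deriv_pow_field, Nat.cast_ofNat]
    ring
  rw [← iteratedDeriv_exp_sq_div_two_zero, ← iteratedDeriv_exp_sq_div_two_zero,
    iteratedDeriv_succ', hderiv, iteratedDeriv_fun_mul (by fun_prop) (by fun_prop)]
  simp [iteratedDeriv_fun_id_zero]

lemma stdGaussianMoment_succ (n : ℕ) :
    stdGaussianMoment (n + 1) = n * stdGaussianMoment (n - 1) := by
  cases n with
  | zero => simp [stdGaussianMoment, integral_id_gaussianReal]
  | succ n => simpa using stdGaussianMoment_add_two n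

lemma prod_comp_eq_prod_pow_card {ι M : Type*} [Fintype ι] [DecidableEq ι] [CommMonoid M]
    {n : ℕ} (f : ι → M) (v : Fin n → ι) :
    ∏ t, f (v t) = ∏ a, f a ^ #{t | v t = a} := by
  rw [← prod_fiberwise univ v]
  refine prod_congr rfl fun a _ => ?_
  rw [prod_congr rfl fun t ht => by rw [(mem_filter.1 ht).2], prod_const]

lemma prod_apply_update_eq_mul_prod_erase {ι β M : Type*} [Fintype ι] [DecidableEq ι]
    [CommMonoid M] (g : β → M) (N : ι → β) (a : ι) (b : β) :
    ∏ c, g (Function.update N a b c) = g b * ∏ c ∈ univ.erase a, g (N c) := by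
  simp_rw [Function.apply_update (fun _ => g), prod_update_of_mem (mem_univ a),
    sdiff_singleton_eq_erase]

theorem Matrix.removeNth_succ_vecCons {α : Type*} {n : ℕ} (i : Fin (n + 1)) (x : α)
    (f : Fin (n + 1) → α) :
    Fin.removeNth i.succ (Matrix.vecCons x f) = Matrix.vecCons x (Fin.removeNth i f) := by
  ext s
  cases s using Fin.cases <;> simp [Fin.removeNth, Fin.succ_succAbove_succ]

section Counting

variable {ι : Type*} [DecidableEq ι] {n : ℕ}

lemma card_filter_vecCons_eq (a : ι) (w : Fin n → ι) (c : ι) :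
    #{t | Matrix.vecCons a w t = c}
      = Function.update (fun c => #{t | w t = c}) a (#{t | w t = a} + 1) c := by
  rw [Fin.card_filter_univ_succ', Function.update_apply]
  simp only [Matrix.cons_val_zero, Matrix.cons_val_succ]
  by_cases h : c = a
  · subst h; simp [add_comm]
  · simp [h, Ne.symm h]

lemma card_filter_removeNth_eq (w : Fin (n + 1) → ι) (t : Fin (n + 1)) (c : ι) :
    #{s | Fin.removeNth t w s = c}
      = Function.update (fun c => #{s | w s = c}) (w t) (#{s | w s = w t} - 1) c := by
  simp only [Fin.removeNth, Function.update_apply, card_filter]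
  split_ifs with h
  · subst h
    rw [Fin.sum_univ_succAbove _ t]
    simp only [↓reduceIte, sum_boole, Nat.cast_id, add_tsub_cancel_left]
    -- the filters differ only in their decidability instances
    rfl
  · rw [Fin.sum_univ_succAbove _ t]
    simp only [Ne.symm h, ↓reduceIte, sum_boole, Nat.cast_id, zero_add]
    rfl

end Counting

section Moments

variable {ι : Type*} [Fintype ι] {n : ℕ}

noncomputable def gaussianMoment (v : Fin n → ι) : ℝ :=
  ∫ x, ∏ t, x (v t) ∂Measure.pi fun _ : ι => gaussianReal 0 1

lemma gaussianMoment_fin_zero (v : Fin 0 → ι) : gaussianMoment v = 1 := by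
  simp [gaussianMoment]

variable [DecidableEq ι]

@[fun_prop]
lemma integrable_prod_comp (v : Fin n → ι) :
    Integrable (fun x : ι → ℝ => ∏ t, x (v t)) (Measure.pi fun _ : ι => gaussianReal 0 1) := by
  simp_rw [prod_comp_eq_prod_pow_card]
  exact Integrable.fintype_prod (f := fun a (y : ℝ) => y ^ #{t | v t = a})
    fun a => integrable_pow_gaussianReal 0 1 _

lemma gaussianMoment_eq_prod (v : Fin n → ι) :
    gaussianMoment v = ∏ a, stdGaussianMoment #{t | v t = a} := by
  simp_rw [gaussianMoment, prod_comp_eq_prod_pow_card]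
  exact integral_fintype_prod_eq_prod (fun a (y : ℝ) => y ^ #{t | v t = a})

theorem gaussianMoment_vecCons (a : ι) (w : Fin (n + 1) → ι) :
    gaussianMoment (Matrix.vecCons a w)
      = ∑ t, if a = w t then gaussianMoment (Fin.removeNth t w) else 0 := by
  set N : ι → ℕ := fun c => #{t | w t = c}
  set R := ∏ c ∈ univ.erase a, stdGaussianMoment (N c)
  have hremove : ∀ t, a = w t →
      gaussianMoment (Fin.removeNth t w) = stdGaussianMoment (N a - 1) * R := by
    rintro t rfl
    simp_rw [gaussianMoment_eq_prod, card_filter_removeNth_eq]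
    exact prod_apply_update_eq_mul_prod_erase _ _ _ _
  calc gaussianMoment (Matrix.vecCons a w)
      = stdGaussianMoment (N a + 1) * R := by
        simp_rw [gaussianMoment_eq_prod, card_filter_vecCons_eq]
        exact prod_apply_update_eq_mul_prod_erase _ _ _ _
    _ = N a * (stdGaussianMoment (N a - 1) * R) := by
        rw [stdGaussianMoment_succ, mul_assoc]
    _ = ∑ t, if a = w t then gaussianMoment (Fin.removeNth t w) else 0 := by
        rw [sum_congr rfl fun t _ => ite_congr rfl (hremove t) fun _ => rfl, sum_ite,
          sum_const_zero, add_zero, sum_const, nsmul_eq_mul]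
        simp_rw [N, eq_comm]

lemma gaussianMoment_four (a b c d : ι) :
    gaussianMoment ![a, b, c, d] = (if a = b then 1 else 0) * (if c = d then 1 else 0)
      + (if a = c then 1 else 0) * (if b = d then 1 else 0)
      + (if a = d then 1 else 0) * (if b = c then 1 else 0) := by
  simp only [gaussianMoment_vecCons, Fin.sum_univ_succ, Fin.removeNth_zero,
    Matrix.removeNth_succ_vecCons, Matrix.cons_val_zero, Matrix.cons_val_succ, Fin.tail_vecCons,
    Fin.sum_univ_zero, gaussianMoment_fin_zero, ite_mul, one_mul, zero_mul, add_zero, add_assoc]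
  -- the two sides differ only in the decidability instances of their `if`s
  rfl

lemma gaussianMoment_six (i j k l m n : ι) :
    gaussianMoment ![i, j, k, l, m, n] = (if i = j then gaussianMoment ![k, l, m, n] else 0)
      + (if i = k then gaussianMoment ![j, l, m, n] else 0)
      + (if i = l then gaussianMoment ![j, k, m, n] else 0)
      + (if i = m then gaussianMoment ![j, k, l, n] else 0)
      + (if i = n then gaussianMoment ![j, k, l, m] else 0) := by
  simp only [gaussianMoment_vecCons i, Fin.sum_univ_succ, Fin.removeNth_zero,
    Matrix.removeNth_succ_vecCons, Matrix.cons_val_zero, Matrix.cons_val_succ, Fin.tail_vecCons,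
    Fin.sum_univ_zero, add_zero, add_assoc]

lemma sum_mul_gaussianMoment_four (F : ι → ι → ι → ι → ℝ) :
    ∑ a, ∑ b, ∑ c, ∑ d, F a b c d * gaussianMoment ![a, b, c, d]
      = ∑ a, ∑ c, F a a c c + ∑ a, ∑ b, F a b a b + ∑ a, ∑ b, F a b b a := by
  simp only [gaussianMoment_four, mul_add, sum_add_distrib, mul_ite, mul_one, mul_zero,
    sum_ite_eq, mem_univ, if_true, sum_ite_irrel, sum_const_zero]

lemma sum_mul_gaussianMoment_six (F : ι → ι → ι → ι → ι → ι → ℝ) :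
    ∑ i, ∑ j, ∑ k, ∑ l, ∑ m, ∑ n, F i j k l m n * gaussianMoment ![i, j, k, l, m, n]
      = ∑ i, ∑ k, ∑ l, ∑ m, ∑ n, F i i k l m n * gaussianMoment ![k, l, m, n]
        + ∑ i, ∑ j, ∑ l, ∑ m, ∑ n, F i j i l m n * gaussianMoment ![j, l, m, n]
        + ∑ i, ∑ j, ∑ k, ∑ m, ∑ n, F i j k i m n * gaussianMoment ![j, k, m, n]
        + ∑ i, ∑ j, ∑ k, ∑ l, ∑ n, F i j k l i n * gaussianMoment ![j, k, l, n]
        + ∑ i, ∑ j, ∑ k, ∑ l, ∑ m, F i j k l m i * gaussianMoment ![j, k, l, m] := by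
  simp only [gaussianMoment_six, mul_add, sum_add_distrib, mul_ite, mul_zero, sum_ite_eq,
    mem_univ, if_true, sum_ite_irrel, sum_const_zero]

lemma integral_sq_cubic_eq_sum_gaussianMoment (T : ι → ι → ι → ℝ) :
    ∫ x, (∑ i, ∑ j, ∑ k, T i j k * x i * x j * x k) ^ 2
        ∂(Measure.pi fun _ : ι => gaussianReal 0 1)
      = ∑ i, ∑ j, ∑ k, ∑ l, ∑ m, ∑ n, T i j k * T l m n * gaussianMoment ![i, j, k, l, m, n] := by
  have hsq : ∀ x : ι → ℝ, (∑ i, ∑ j, ∑ k, T i j k * x i * x j * x k) ^ 2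
      = ∑ i, ∑ j, ∑ k, ∑ l, ∑ m, ∑ n, T i j k * T l m n * ∏ t, x (![i, j, k, l, m, n] t) := by
    intro x
    simp only [sq, sum_mul, mul_sum, Fin.prod_univ_six, Matrix.cons_val_zero, Matrix.cons_val_one,
      Matrix.cons_val]
    simp only [mul_comm, mul_left_comm]
  simp only [hsq, gaussianMoment]
  simp (disch := fun_prop) only [integral_finsetSum, integral_const_mul]

section SymmetricTensor

variable (T : ι → ι → ι → ℝ) (hT : ∀ i j k, T i j k = T j i k ∧ T i j k = T i k j)
include hT

lemma sum_tensor_mul_gaussianMoment_six :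
    ∑ i, ∑ j, ∑ k, ∑ l, ∑ m, ∑ n, T i j k * T l m n * gaussianMoment ![i, j, k, l, m, n]
      = 2 * ∑ i, ∑ k, ∑ l, ∑ m, ∑ n, T i i k * T l m n * gaussianMoment ![k, l, m, n]
        + 3 * ∑ i, ∑ j, ∑ k, ∑ m, ∑ n, T i j k * T i m n * gaussianMoment ![j, k, m, n] := by
  rw [sum_mul_gaussianMoment_six (fun i j k l m n => T i j k * T l m n)]
  have h₁ : ∀ i j, T i j i = T i i j := fun i j => (hT i j i).2
  have h₂ : ∀ i l n, T l i n = T i l n := fun i l n => (hT l i n).1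
  have h₃ : ∀ i l m, T l m i = T i l m := fun i l m => by rw [(hT l m i).2, (hT l i m).1]
  simp only [h₁, h₂, h₃]
  ring

lemma sum_diag_mul_gaussianMoment_four :
    ∑ i, ∑ k, ∑ l, ∑ m, ∑ n, T i i k * T l m n * gaussianMoment ![k, l, m, n]
      = 3 * ∑ i, (∑ j, T i j j) ^ 2 := by
  have h₁ : ∀ i k, T i i k = T k i i := fun i k => by rw [(hT i i k).2, (hT i k i).1]
  have h₂ : ∀ k l, T l k l = T k l l := fun k l => (hT l k l).1
  calc _ = 3 * ∑ i, ∑ k, ∑ l, T i i k * T k l l := by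
        simp only [sum_mul_gaussianMoment_four (fun k l m n => T _ _ k * T l m n), h₁, h₂,
          sum_add_distrib]
        ring
    _ = 3 * ∑ k, (∑ i, T i i k) * ∑ l, T k l l := by
        rw [sum_comm]
        simp only [sum_mul_sum]
    _ = 3 * ∑ i, (∑ j, T i j j) ^ 2 := by
        simp only [h₁, sq]

lemma sum_slice_mul_gaussianMoment_four :
    ∑ i, ∑ j, ∑ k, ∑ m, ∑ n, T i j k * T i m n * gaussianMoment ![j, k, m, n]
      = ∑ i, (∑ j, T i j j) ^ 2 + 2 * ∑ i, ∑ j, ∑ k, T i j k ^ 2 := by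
  have h : ∀ i j k, T i k j = T i j k := fun i j k => (hT i j k).2.symm
  simp only [sum_mul_gaussianMoment_four (fun j k m n => T _ j k * T _ m n), h]
  simp only [sq, sum_mul_sum, sum_add_distrib]
  ring

end SymmetricTensor

end Moments

/-- For every symmetric 3-tensor `T` on `ℝ^p`,
`E[T(γ)²] = 6‖T‖_Fr² + 9‖M‖²` where `γ` is a standard Gaussian vector,
`M i = tr(T_i) = ∑ j, T i j j` and `‖T‖_Fr² = ∑ i j k, (T i j k)²`. -/
theorem gaussian_tensor_second_moment
    (p : ℕ) (T : Fin p → Fin p → Fin p → ℝ)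
    (hsym : ∀ i j k, T i j k = T j i k ∧ T i j k = T i k j) :
    ∫ γ : Fin p → ℝ,
        (∑ i, ∑ j, ∑ k, T i j k * γ i * γ j * γ k) ^ 2
        ∂(Measure.pi fun _ : Fin p => gaussianReal 0 1)
      = 6 * (∑ i, ∑ j, ∑ k, (T i j k) ^ 2) + 9 * ∑ i, (∑ j, T i j j) ^ 2 := by
  rw [integral_sq_cubic_eq_sum_gaussianMoment, sum_tensor_mul_gaussianMoment_six T hsym,
    sum_diag_mul_gaussianMoment_four T hsym, sum_slice_mul_gaussianMoment_four T hsym]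
  ring
end

section
/- Suppose the symmetric 3-tensor T satisfies condition (Γ). Let ∇T(u) ∈ ℝ^p be the gradient of T(u), whose i-th entry equals 3∑_{j,k=1}^p T_{i,j,k} u_j u_k. Then for every u ∈ ℝ^p it holds ‖∇T(u)‖ ≤ 3τ ‖Γu‖² ‖Γ‖. -/
open Matrix Finset

noncomputable def euclNorm {p : ℕ} (v : Fin p → ℝ) : ℝ := Real.sqrt (∑ i, v i ^ 2)

noncomputable def specNorm {p : ℕ} (A : Matrix (Fin p) (Fin p) ℝ) : ℝ :=
  ‖Matrix.toEuclideanCLM (𝕜 := ℝ) A‖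

/-!
Since `⟨∇T(u), v⟩ = 3 T(v, u, u)`, it suffices to show `T(v, u, u) ≤ τ ‖Γu‖² ‖Γv‖`, which only
involves the plane spanned by `u` and `v`. Orthonormalising in the `Γ`-geometry, the restriction of
`T` to that plane is a binary cubic `f` with `|f| ≤ τ` on the unit circle, and the claim becomes
`f(1,0)² + (∂_y f(1,0) / 3)² ≤ τ²`. Writing this vector as `r (cos 3θ, sin 3θ)`, the number `r` is
a signed combination of the values of `f` at the angles `θ` and `θ ± π/3`, with weights that are
squares summing to `1`; hence `r ≤ τ`. Directions killed by `Γ` are handled separately: along them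
the cubic is a bounded, hence constant, polynomial.
-/

def binaryCubic (A B C D x y : ℝ) : ℝ :=
  A * x ^ 3 + 3 * B * x ^ 2 * y + 3 * C * x * y ^ 2 + D * y ^ 3

theorem exists_eq_mul_cos_three_mul (A B : ℝ) :
    ∃ r θ : ℝ, 0 ≤ r ∧ A = r * Real.cos (3 * θ) ∧ B = r * Real.sin (3 * θ) := by
  refine ⟨‖(⟨A, B⟩ : ℂ)‖, Complex.arg ⟨A, B⟩ / 3, norm_nonneg _, ?_, ?_⟩
  · rw [mul_div_cancel₀ _ three_ne_zero, Complex.norm_mul_cos_arg]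
  · rw [mul_div_cancel₀ _ three_ne_zero, Complex.norm_mul_sin_arg]

-- With `c² + s² = 1` and `q = √3`, the left side is `cos 3θ · A + sin 3θ · B` and the three
-- points are at the angles `θ`, `θ + π/3` and `θ - π/3`.
theorem binaryCubic_quadrature (A B C D : ℝ) {c s q : ℝ} (hq : q ^ 2 = 3) :
    (c ^ 2 + s ^ 2) ^ 2 * ((c ^ 3 - 3 * c * s ^ 2) * A + (3 * c ^ 2 * s - s ^ 3) * B)
      = ((3 * c ^ 2 - s ^ 2) / 3) ^ 2 * binaryCubic A B C D c s
        - (2 * s * (q * c - s) / 3) ^ 2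
            * binaryCubic A B C D (c / 2 - q * s / 2) (s / 2 + q * c / 2)
        - (2 * s * (q * c + s) / 3) ^ 2
            * binaryCubic A B C D (c / 2 + q * s / 2) (s / 2 - q * c / 2) := by
  unfold binaryCubic
  linear_combination (-2/9*D*c^2*s^5 + 1/3*D*c^4*s^3 + 1/9*D*c^4*s^3*q^2 - 2/3*C*c^3*s^4
    + C*c^5*s^2 + 1/3*C*c^5*s^2*q^2 + 1/3*B*s^7 - 1/3*B*c^2*s^5 - 1/3*B*c^2*s^5*q^2
    - 7/3*B*c^4*s^3 - 2/3*B*c^4*s^3*q^2 + A*c*s^6 + 2/9*A*c*s^6*q^2 + 5/3*A*c^3*s^4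
    + 1/3*A*c^3*s^4*q^2 + 1/9*A*c^5*s^2) * hq

theorem quadrature_weights_sum {c s q : ℝ} (hq : q ^ 2 = 3) :
    ((3 * c ^ 2 - s ^ 2) / 3) ^ 2 + (2 * s * (q * c - s) / 3) ^ 2 + (2 * s * (q * c + s) / 3) ^ 2
      = (c ^ 2 + s ^ 2) ^ 2 := by
  linear_combination 8 / 9 * c ^ 2 * s ^ 2 * hq

theorem sq_add_sq_le_of_abs_binaryCubic_le {A B C D τ : ℝ}
    (h : ∀ x y, x ^ 2 + y ^ 2 = 1 → |binaryCubic A B C D x y| ≤ τ) :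
    A ^ 2 + B ^ 2 ≤ τ ^ 2 := by
  obtain ⟨r, θ, hr, rfl, rfl⟩ := exists_eq_mul_cos_three_mul A B
  have hr_eq : r = Real.cos (3 * θ) * (r * Real.cos (3 * θ))
      + Real.sin (3 * θ) * (r * Real.sin (3 * θ)) := by
    linear_combination (-r) * Real.cos_sq_add_sin_sq (3 * θ)
  have hcs : Real.cos θ ^ 2 + Real.sin θ ^ 2 = 1 := Real.cos_sq_add_sin_sq θ
  have hcos : Real.cos (3 * θ) = Real.cos θ ^ 3 - 3 * Real.cos θ * Real.sin θ ^ 2 := by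
    rw [Real.cos_three_mul]; linear_combination 3 * Real.cos θ * hcs
  have hsin : Real.sin (3 * θ) = 3 * Real.cos θ ^ 2 * Real.sin θ - Real.sin θ ^ 3 := by
    rw [Real.sin_three_mul]; linear_combination (-3) * Real.sin θ * hcs
  generalize Real.cos θ = c at hcs hcos hsin
  generalize Real.sin θ = s at hcs hcos hsin
  set q := √3
  have hq : q ^ 2 = 3 := Real.sq_sqrt (by norm_num)
  have e₀ := (le_abs_self _).trans (h c s hcs)
  have e₁ := (neg_le_abs _).trans (h (c / 2 - q * s / 2) (s / 2 + q * c / 2)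
    (by linear_combination (c ^ 2 + s ^ 2) / 4 * hq + hcs))
  have e₂ := (neg_le_abs _).trans (h (c / 2 + q * s / 2) (s / 2 - q * c / 2)
    (by linear_combination (c ^ 2 + s ^ 2) / 4 * hq + hcs))
  have hrτ : r ≤ τ := by
    have hquad := binaryCubic_quadrature (r * Real.cos (3 * θ)) (r * Real.sin (3 * θ)) C D hq
      (c := c) (s := s)
    have hsum := quadrature_weights_sum hq (c := c) (s := s)
    rw [hcs, one_pow, one_mul, ← hcos, ← hsin, ← hr_eq] at hquad
    rw [hcs, one_pow] at hsum
    nlinarith [mul_le_mul_of_nonneg_left e₀ (sq_nonneg ((3 * c ^ 2 - s ^ 2) / 3)),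
      mul_le_mul_of_nonneg_left e₁ (sq_nonneg (2 * s * (q * c - s) / 3)),
      mul_le_mul_of_nonneg_left e₂ (sq_nonneg (2 * s * (q * c + s) / 3))]
  calc (r * Real.cos (3 * θ)) ^ 2 + (r * Real.sin (3 * θ)) ^ 2 = r ^ 2 := by
        linear_combination r ^ 2 * Real.cos_sq_add_sin_sq (3 * θ)
    _ ≤ τ ^ 2 := pow_le_pow_left₀ hr hrτ 2

open Polynomial in
theorem coeffs_eq_zero_of_abs_cubic_le {a b c d K : ℝ}
    (h : ∀ t : ℝ, |a + b * t + c * t ^ 2 + d * t ^ 3| ≤ K) : b = 0 ∧ c = 0 := by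
  set P : ℝ[X] := C a + C b * X + C c * X ^ 2 + C d * X ^ 3
  have hdeg : P.degree ≤ 0 := (isBoundedUnder_abs_atTop_iff P).mp <|
    Filter.isBoundedUnder_of ⟨K, fun t => by simpa [P] using h t⟩
  have hP := eq_C_of_degree_le_zero hdeg
  have h1 := congrArg (coeff · 1) hP
  have h2 := congrArg (coeff · 2) hP
  simp [P, coeff_X, coeff_C, coeff_X_pow] at h1 h2
  exact ⟨h1, h2⟩

theorem mul_add_mul_le_sqrt_mul {a b x y τ : ℝ} (h : a ^ 2 + b ^ 2 ≤ τ ^ 2) (hτ : 0 ≤ τ) :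
    x * a + y * b ≤ √(x ^ 2 + y ^ 2) * τ :=
  calc x * a + y * b ≤ |x * a + y * b| := le_abs_self _
    _ ≤ √((x ^ 2 + y ^ 2) * τ ^ 2) := Real.abs_le_sqrt <| by
      nlinarith [sq_nonneg (x * b - y * a),
        mul_le_mul_of_nonneg_left h (by positivity : 0 ≤ x ^ 2 + y ^ 2)]
    _ = √(x ^ 2 + y ^ 2) * τ := by rw [Real.sqrt_mul (by positivity), Real.sqrt_sq hτ]

section SymmetricTrilinear

variable {V E : Type*} [AddCommGroup V] [Module ℝ V] [NormedAddCommGroup E] [InnerProductSpace ℝ E]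

def IsSymmTrilinear (B : V →ₗ[ℝ] V →ₗ[ℝ] V →ₗ[ℝ] ℝ) : Prop :=
  ∀ x y z, B x y z = B y x z ∧ B x y z = B x z y

variable {B : V →ₗ[ℝ] V →ₗ[ℝ] V →ₗ[ℝ] ℝ} {L : V →ₗ[ℝ] E} {τ : ℝ}

theorem IsSymmTrilinear.apply_smul_add_smul (hB : IsSymmTrilinear B) (a b : V) (x y : ℝ) :
    B (x • a + y • b) (x • a + y • b) (x • a + y • b)
      = binaryCubic (B a a a) (B a a b) (B a b b) (B b b b) x y := by
  have hbaa : B b a a = B a a b := by rw [(hB b a a).1, (hB a b a).2]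
  have haba : B a b a = B a a b := (hB a b a).2
  have hbab : B b a b = B a b b := (hB b a b).1
  have hbba : B b b a = B a b b := by rw [(hB b b a).2, (hB b a b).1]
  simp only [map_add, map_smul, LinearMap.add_apply, LinearMap.smul_apply, smul_eq_mul,
    hbaa, haba, hbab, hbba]
  unfold binaryCubic
  ring

theorem IsSymmTrilinear.apply_eq_zero_of_map_eq_zero (hB : IsSymmTrilinear B)
    (hBL : ∀ x, |B x x x| ≤ τ * ‖L x‖ ^ 3) {z : V} (hz : L z = 0) (x : V) :
    B x x z = 0 ∧ B x z z = 0 := by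
  have hbdd : ∀ t : ℝ, |B x x x + 3 * B x x z * t + 3 * B x z z * t ^ 2 + B z z z * t ^ 3|
      ≤ τ * ‖L x‖ ^ 3 := fun t => by
    convert hBL ((1 : ℝ) • x + t • z) using 2
    · rw [hB.apply_smul_add_smul, binaryCubic]; ring
    · simp [hz]
  obtain ⟨h1, h2⟩ := coeffs_eq_zero_of_abs_cubic_le hbdd
  constructor <;> linarith

theorem IsSymmTrilinear.sq_add_sq_le (hB : IsSymmTrilinear B)
    (hBL : ∀ x, |B x x x| ≤ τ * ‖L x‖ ^ 3) {a b : V} (ha : ‖L a‖ = 1) (hb : ‖L b‖ = 1)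
    (hab : inner ℝ (L a) (L b) = 0) :
    B a a a ^ 2 + B a a b ^ 2 ≤ τ ^ 2 := by
  refine sq_add_sq_le_of_abs_binaryCubic_le (C := B a b b) (D := B b b b) fun x y hxy => ?_
  have hnorm : ‖L (x • a + y • b)‖ = 1 := by
    have hsq : ‖L (x • a + y • b)‖ ^ 2 = 1 := by
      rw [map_add, map_smul, map_smul, sq,
        norm_add_sq_eq_norm_sq_add_norm_sq_real (by simp [inner_smul_left, inner_smul_right, hab]),
        norm_smul, norm_smul, ha, hb, Real.norm_eq_abs, Real.norm_eq_abs]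
      nlinarith [sq_abs x, sq_abs y]
    exact (pow_eq_one_iff_of_nonneg (norm_nonneg _) two_ne_zero).mp hsq
  have h := hBL (x • a + y • b)
  rwa [hB.apply_smul_add_smul, hnorm, one_pow, mul_one] at h

theorem IsSymmTrilinear.apply_le (hB : IsSymmTrilinear B)
    (hBL : ∀ x, |B x x x| ≤ τ * ‖L x‖ ^ 3) (u v : V) :
    B v u u ≤ τ * ‖L u‖ ^ 2 * ‖L v‖ := by
  rcases eq_or_ne (L u) 0 with hu | hu
  · simp [(hB.apply_eq_zero_of_map_eq_zero hBL hu v).2, hu]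
  set α := ‖L u‖
  have hα : 0 < α := norm_pos_iff.mpr hu
  have hτ : 0 ≤ τ := nonneg_of_mul_nonneg_left ((abs_nonneg _).trans (hBL u)) (by positivity)
  set q := inner ℝ (L u) (L v) / α ^ 2
  set w := v - q • u
  have huw : inner ℝ (L u) (L w) = 0 := by
    simp only [w, map_sub, map_smul, inner_sub_right, real_inner_smul_right,
      real_inner_self_eq_norm_sq, q]
    field_simp
    ring
  have hv : ‖L v‖ = √(‖L w‖ ^ 2 + (q * α) ^ 2) := by
    have hLv : L v = L w + q • L u := by simp [w]
    rw [← Real.sqrt_sq (norm_nonneg (L v)), hLv, sq, norm_add_sq_eq_norm_sq_add_norm_sq_real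
      (by rw [real_inner_smul_right, real_inner_comm, huw, mul_zero]), norm_smul, Real.norm_eq_abs]
    congr 1
    rw [mul_pow, ← sq_abs q]
    ring
  have hsplit : B v u u = B u u w + q * B u u u := by
    have hvw : v = w + q • u := by simp [w]
    rw [hvw, map_add, map_smul, LinearMap.add_apply, LinearMap.add_apply, LinearMap.smul_apply,
      LinearMap.smul_apply, smul_eq_mul, (hB w u u).1, (hB u w u).2]
  -- `β` is `B a a b` for the `L`-orthonormal pair `a = u / ‖L u‖`, `b = w / ‖L w‖`,
  -- or `0` if `L w = 0`.
  obtain ⟨β, hβ, hAβ⟩ : ∃ β, B u u w = ‖L w‖ * α ^ 2 * β ∧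
      (B u u u / α ^ 3) ^ 2 + β ^ 2 ≤ τ ^ 2 := by
    rcases eq_or_ne (L w) 0 with hw | hw
    · refine ⟨0, by simp [(hB.apply_eq_zero_of_map_eq_zero hBL hw u).1], ?_⟩
      have h := hBL u
      rw [zero_pow two_ne_zero, add_zero, div_pow, div_le_iff₀ (by positivity), ← mul_pow,
        ← sq_abs]
      exact pow_le_pow_left₀ (abs_nonneg _) h 2
    · set δ := ‖L w‖
      have hδ : 0 < δ := norm_pos_iff.mpr hw
      have key := hB.sq_add_sq_le hBL (a := α⁻¹ • u) (b := δ⁻¹ • w)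
        (by simp [norm_smul, α, hα.ne']) (by simp [norm_smul, δ, hδ.ne'])
        (by simp [inner_smul_left, inner_smul_right, huw])
      simp only [map_smul, LinearMap.smul_apply, smul_eq_mul] at key
      refine ⟨δ⁻¹ * (α⁻¹ * (α⁻¹ * B u u w)), by field_simp, ?_⟩
      convert key using 2
      ring
  calc B v u u = α ^ 2 * (‖L w‖ * β + q * α * (B u u u / α ^ 3)) := by
        rw [hsplit, hβ]; field_simp
    _ ≤ α ^ 2 * (√(‖L w‖ ^ 2 + (q * α) ^ 2) * τ) := by
        gcongr
        exact mul_add_mul_le_sqrt_mul (by linarith) hτ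
    _ = τ * α ^ 2 * ‖L v‖ := by rw [hv]; ring

end SymmetricTrilinear

section Coordinates

variable {p : ℕ}

noncomputable def tensorForm (T : Fin p → Fin p → Fin p → ℝ) :
    (Fin p → ℝ) →ₗ[ℝ] (Fin p → ℝ) →ₗ[ℝ] (Fin p → ℝ) →ₗ[ℝ] ℝ :=
  Matrix.toLinearMap₂' ℝ (Matrix.of fun i j => Fintype.linearCombination ℝ (T i j))

theorem tensorForm_apply (T : Fin p → Fin p → Fin p → ℝ) (x y z : Fin p → ℝ) :
    tensorForm T x y z = ∑ i, ∑ j, ∑ k, T i j k * x i * y j * z k := by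
  rw [tensorForm, Matrix.toLinearMap₂'_apply]
  simp only [Matrix.of_apply, LinearMap.coe_sum, Finset.sum_apply,
    LinearMap.smul_apply, Fintype.linearCombination_apply, smul_eq_mul, Finset.mul_sum]
  refine Finset.sum_congr rfl fun i _ => Finset.sum_congr rfl fun j _ =>
    Finset.sum_congr rfl fun k _ => by ring

theorem isSymmTrilinear_tensorForm {T : Fin p → Fin p → Fin p → ℝ}
    (hT : ∀ i j k, T i j k = T j i k ∧ T i j k = T i k j) : IsSymmTrilinear (tensorForm T) := by
  refine fun x y z => ⟨?_, ?_⟩ <;> simp only [tensorForm_apply]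
  · rw [Finset.sum_comm]
    refine Finset.sum_congr rfl fun i _ => Finset.sum_congr rfl fun j _ =>
      Finset.sum_congr rfl fun k _ => ?_
    rw [(hT j i k).1]; ring
  · refine Finset.sum_congr rfl fun i _ => ?_
    rw [Finset.sum_comm]
    refine Finset.sum_congr rfl fun j _ => Finset.sum_congr rfl fun k _ => ?_
    rw [(hT i k j).2]; ring

def euclideanMulVec (Γ : Matrix (Fin p) (Fin p) ℝ) :
    (Fin p → ℝ) →ₗ[ℝ] EuclideanSpace ℝ (Fin p) :=
  (WithLp.linearEquiv 2 ℝ (Fin p → ℝ)).symm.toLinearMap ∘ₗ Matrix.toLin' Γ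

theorem euclNorm_eq_norm (v : Fin p → ℝ) : euclNorm v = ‖WithLp.toLp 2 v‖ := by
  simp [euclNorm, EuclideanSpace.norm_eq]

theorem norm_euclideanMulVec (Γ : Matrix (Fin p) (Fin p) ℝ) (v : Fin p → ℝ) :
    ‖euclideanMulVec Γ v‖ = euclNorm (Γ *ᵥ v) := by
  simp [euclideanMulVec, euclNorm_eq_norm]

theorem euclNorm_mulVec_le (Γ : Matrix (Fin p) (Fin p) ℝ) (v : Fin p → ℝ) :
    euclNorm (Γ *ᵥ v) ≤ specNorm Γ * euclNorm v := by
  rw [euclNorm_eq_norm, euclNorm_eq_norm, ← Matrix.toEuclideanCLM_toLp]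
  exact ContinuousLinearMap.le_opNorm _ _

end Coordinates

theorem tensor_gradient_norm_bound_general
    (p : ℕ) (T : Fin p → Fin p → Fin p → ℝ)
    (hsym : ∀ i j k, T i j k = T j i k ∧ T i j k = T i k j)
    (Γ : Matrix (Fin p) (Fin p) ℝ) (τ : ℝ) (hτ : 0 < τ)
    (hT : ∀ u : Fin p → ℝ,
      |∑ i, ∑ j, ∑ k, T i j k * u i * u j * u k| ≤ τ * euclNorm (Γ.mulVec u) ^ 3) :
    ∀ u : Fin p → ℝ,
      euclNorm (fun i => 3 * ∑ j, ∑ k, T i j k * u j * u k)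
        ≤ 3 * τ * euclNorm (Γ.mulVec u) ^ 2 * specNorm Γ := by
  intro u
  set D : Fin p → ℝ := fun i => ∑ j, ∑ k, T i j k * u j * u k
  have hD : euclNorm D ^ 2 = tensorForm T D u u := by
    rw [euclNorm, Real.sq_sqrt (by positivity), tensorForm_apply]
    refine Finset.sum_congr rfl fun i _ => ?_
    have h : ∀ j k, T i j k * D i * u j * u k = D i * (T i j k * u j * u k) := fun j k => by ring
    simp only [h, ← Finset.mul_sum, sq, D]
  have hle := (isSymmTrilinear_tensorForm hsym).apply_le (L := euclideanMulVec Γ)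
    (fun x => by simpa only [norm_euclideanMulVec, tensorForm_apply] using hT x) u D
  rw [norm_euclideanMulVec, norm_euclideanMulVec, ← hD] at hle
  have hD_le : euclNorm D ≤ τ * euclNorm (Γ *ᵥ u) ^ 2 * specNorm Γ := by
    have hK : 0 ≤ τ * euclNorm (Γ *ᵥ u) ^ 2 * specNorm Γ :=
      mul_nonneg (by positivity) (norm_nonneg _)
    have hsq := hle.trans (mul_le_mul_of_nonneg_left (euclNorm_mulVec_le Γ D) (by positivity))
    nlinarith [Real.sqrt_nonneg (∑ i, D i ^ 2)]
  have h3 : euclNorm (fun i => 3 * D i) = 3 * euclNorm D := by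
    rw [euclNorm_eq_norm, euclNorm_eq_norm, show (fun i => 3 * D i) = (3 : ℝ) • D from rfl,
      WithLp.toLp_smul, norm_smul, Real.norm_ofNat]
  rw [h3]
  linarith

/-- If the symmetric 3-tensor `T` satisfies condition (Γ), then the
gradient `∇T(u)`, with `i`-th entry `3 ∑_{j,k} T_{i,j,k} u_j u_k`, satisfies
`‖∇T(u)‖ ≤ 3τ ‖Γu‖² ‖Γ‖` for every `u`. -/
theorem tensor_gradient_norm_bound
    (p : ℕ) (T : Fin p → Fin p → Fin p → ℝ)
    (hsym : ∀ i j k, T i j k = T j i k ∧ T i j k = T i k j)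
    (Γ : Matrix (Fin p) (Fin p) ℝ) (hΓ : Γ.IsSymm) (τ : ℝ) (hτ : 0 < τ)
    (hT : ∀ u : Fin p → ℝ,
      |∑ i, ∑ j, ∑ k, T i j k * u i * u j * u k| ≤ τ * euclNorm (Γ.mulVec u) ^ 3) :
    ∀ u : Fin p → ℝ,
      euclNorm (fun i => 3 * ∑ j, ∑ k, T i j k * u j * u k)
        ≤ 3 * τ * euclNorm (Γ.mulVec u) ^ 2 * specNorm Γ :=
  tensor_gradient_norm_bound_general p T hsym Γ τ hτ hT
end

section
/- Suppose the symmetric 3-tensor T satisfies condition (Γ). Then for every u ∈ ℝ^p it holds ‖T[u]‖_Fr² ≤ τ² ‖Γu‖² tr(Γ⁴), where T[u] = ∑_{i=1}^p u_i T_i. -/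
/-!
For `ε > 0` the form `B_ε(x, y) = ⟨Γx, Γy⟩ + ε⟨x, y⟩` is an inner product with
`T(w)² ≤ τ² B_ε(w, w)³`. A Banach-type polarisation bound for symmetric trilinear forms gives
`T(u, v, v)² ≤ τ² B_ε(u, u) B_ε(v, v)²`, hence, as `ε → 0`, `(vᵀ T[u] v)² ≤ τ² ‖Γu‖² (vᵀ Γ² v)²`.
The polarisation bound lives in the plane of two `B_ε`-orthonormal vectors, where it is the sharp
estimate `A² + B² ≤ τ²` for a binary cubic `A x³ + 3B x²y + 3C xy² + D y³` bounded by `τ` on the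
unit circle, proved by an exact three-node quadrature. In an orthonormal eigenbasis `(e_m)` of
`T[u]`, `‖T[u]‖²_Fr = ∑ (e_mᵀ T[u] e_m)² ≤ τ² ‖Γu‖² ∑ (e_mᵀ Γ² e_m)² ≤ τ² ‖Γu‖² tr Γ⁴`.
-/

open Matrix Finset

open Real in
theorem mul_cos_add_mul_sin_le_of_binaryCubic_bound {A B C D τ : ℝ}
    (h : ∀ x y : ℝ, x ^ 2 + y ^ 2 = 1 →
      (A * x ^ 3 + 3 * B * x ^ 2 * y + 3 * C * x * y ^ 2 + D * y ^ 3) ^ 2 ≤ τ ^ 2)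
    (θ : ℝ) : A * cos θ + B * sin θ ≤ |τ| := by
  set c := cos (θ / 3)
  set s := sin (θ / 3)
  set r := √3
  have hcs : c ^ 2 + s ^ 2 = 1 := cos_sq_add_sin_sq _
  have hr : r ^ 2 = 3 := sq_sqrt (by norm_num)
  have hθ : θ = 3 * (θ / 3) := by ring
  set f : ℝ → ℝ → ℝ := fun x y => A * x ^ 3 + 3 * B * x ^ 2 * y + 3 * C * x * y ^ 2 + D * y ^ 3
  have hf : ∀ x y, x ^ 2 + y ^ 2 = 1 → |f x y| ≤ |τ| := fun x y hxy => sq_le_sq.mp (h x y hxy)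
  -- Nodes at the angles `φₖ = θ / 3 + k π / 3`, `k = 0, 1, 2`, with signs `(-1)ᵏ` and weights
  -- `((1 + 2 cos 2φₖ) / 3) ^ 2`; the weights are nonnegative and sum to `1`.
  set W₀ := (1 + 2 * (c ^ 2 - s ^ 2)) ^ 2 / 9
  set W₁ := (1 - (c ^ 2 - s ^ 2) - 2 * r * c * s) ^ 2 / 9
  set W₂ := (1 - (c ^ 2 - s ^ 2) + 2 * r * c * s) ^ 2 / 9
  have hquad : A * cos θ + B * sin θ = W₀ * f c s - W₁ * f ((c - r * s) / 2) ((s + r * c) / 2)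
      + W₂ * f ((-c - r * s) / 2) ((-s + r * c) / 2) := by
    rw [hθ, cos_three_mul, sin_three_mul]
    grind
  have hmass : W₀ + W₁ + W₂ = 1 := by grind
  have h₀ := hf c s hcs
  have h₁ := hf ((c - r * s) / 2) ((s + r * c) / 2) (by grind)
  have h₂ := hf ((-c - r * s) / 2) ((-s + r * c) / 2) (by grind)
  have e₀ : W₀ * f c s ≤ W₀ * |τ| := mul_le_mul_of_nonneg_left (abs_le.mp h₀).2 (by positivity)
  have e₁ : -(W₁ * |τ|) ≤ W₁ * f ((c - r * s) / 2) ((s + r * c) / 2) := by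
    rw [← mul_neg]; exact mul_le_mul_of_nonneg_left (abs_le.mp h₁).1 (by positivity)
  have e₂ : W₂ * f ((-c - r * s) / 2) ((-s + r * c) / 2) ≤ W₂ * |τ| :=
    mul_le_mul_of_nonneg_left (abs_le.mp h₂).2 (by positivity)
  have hsum : W₀ * |τ| + W₁ * |τ| + W₂ * |τ| = |τ| := by rw [← add_mul, ← add_mul, hmass, one_mul]
  linarith

theorem sq_add_sq_le_of_forall_mul_cos_add_mul_sin_le {A B τ : ℝ}
    (h : ∀ θ, A * Real.cos θ + B * Real.sin θ ≤ τ) : A ^ 2 + B ^ 2 ≤ τ ^ 2 := by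
  set z : ℂ := ⟨A, B⟩
  have hz : ‖z‖ ^ 2 = A ^ 2 + B ^ 2 := by rw [Complex.sq_norm, Complex.normSq_mk]; ring
  rcases eq_or_ne z 0 with hz0 | hz0
  · rw [← hz, hz0, norm_zero, sq, zero_mul]; positivity
  have hzτ : ‖z‖ ≤ τ := by
    convert h z.arg using 1
    rw [Complex.cos_arg hz0, Complex.sin_arg]
    field_simp
    rw [hz]; simp [z, sq]
  rw [← hz]
  exact pow_le_pow_left₀ (norm_nonneg z) hzτ 2

theorem sq_add_sq_le_of_binaryCubic_bound {A B C D τ : ℝ}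
    (h : ∀ x y : ℝ, x ^ 2 + y ^ 2 = 1 →
      (A * x ^ 3 + 3 * B * x ^ 2 * y + 3 * C * x * y ^ 2 + D * y ^ 3) ^ 2 ≤ τ ^ 2) :
    A ^ 2 + B ^ 2 ≤ τ ^ 2 := by
  rw [← sq_abs τ]
  exact sq_add_sq_le_of_forall_mul_cos_add_mul_sin_le (mul_cos_add_mul_sin_le_of_binaryCubic_bound h)

namespace LinearMap

variable {V : Type*} [AddCommGroup V] [Module ℝ V]
  {T : V →ₗ[ℝ] V →ₗ[ℝ] V →ₗ[ℝ] ℝ} {B : LinearMap.BilinForm ℝ V} {τ : ℝ}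

theorem trilinear_apply_smul_add_smul (hT₁₂ : ∀ x y z, T x y z = T y x z)
    (hT₂₃ : ∀ x y z, T x y z = T x z y) (e f : V) (x y : ℝ) :
    T (x • e + y • f) (x • e + y • f) (x • e + y • f) =
      T e e e * x ^ 3 + 3 * T e e f * x ^ 2 * y + 3 * T e f f * x * y ^ 2 + T f f f * y ^ 3 := by
  simp only [map_add, map_smul, LinearMap.add_apply, LinearMap.smul_apply, smul_eq_mul]
  have hefe : T e f e = T e e f := hT₂₃ e f e
  have hfee : T f e e = T e e f := (hT₁₂ f e e).trans hefe
  have hfef : T f e f = T e f f := hT₁₂ f e f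
  have hffe : T f f e = T e f f := (hT₂₃ f f e).trans hfef
  rw [hefe, hfee, hfef, hffe]
  ring

theorem BilinForm.apply_smul_add_smul (hB : B.IsSymm) (e f : V) (x y : ℝ) :
    B (x • e + y • f) (x • e + y • f) = B e e * x ^ 2 + 2 * B e f * x * y + B f f * y ^ 2 := by
  simp only [map_add, map_smul, LinearMap.add_apply, LinearMap.smul_apply, smul_eq_mul]
  rw [hB.eq f e]
  ring

theorem sq_trilinear_add_sq_le_of_orthonormal (hT₁₂ : ∀ x y z, T x y z = T y x z)
    (hT₂₃ : ∀ x y z, T x y z = T x z y) (hB : B.IsSymm)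
    (hbound : ∀ w, T w w w ^ 2 ≤ τ ^ 2 * B w w ^ 3) {e f : V}
    (he : B e e = 1) (hf : B f f = 1) (hef : B e f = 0) :
    T e e e ^ 2 + T e e f ^ 2 ≤ τ ^ 2 := by
  refine sq_add_sq_le_of_binaryCubic_bound (C := T e f f) (D := T f f f) fun x y hxy => ?_
  have hunit : B (x • e + y • f) (x • e + y • f) = 1 := by
    rw [BilinForm.apply_smul_add_smul hB, he, hf, hef]; linear_combination hxy
  have := hbound (x • e + y • f)
  rw [hunit, trilinear_apply_smul_add_smul hT₁₂ hT₂₃] at this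
  linear_combination this

theorem sq_trilinear_le_of_unit (hT₁₂ : ∀ x y z, T x y z = T y x z)
    (hT₂₃ : ∀ x y z, T x y z = T x z y) (hB : B.IsSymm) (hpos : ∀ w, w ≠ 0 → 0 < B w w)
    (hbound : ∀ w, T w w w ^ 2 ≤ τ ^ 2 * B w w ^ 3) {e : V} (he : B e e = 1) (x : V) :
    T e e x ^ 2 ≤ τ ^ 2 * B x x := by
  have hnonneg : ∀ w, 0 ≤ B w w := fun w => by
    rcases eq_or_ne w 0 with rfl | hw
    · simp
    · exact (hpos w hw).le
  set g := x - B e x • e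
  have hTg : T e e g = T e e x - B e x * T e e e := by simp [g]
  have hBg : B g g = B x x - B e x ^ 2 := by simp [g, hB.eq x e, he]; ring
  have heg : B e g = 0 := by simp [g, he]
  obtain ⟨b, hb, hsq⟩ : ∃ b, T e e g = √(B g g) * b ∧ T e e e ^ 2 + b ^ 2 ≤ τ ^ 2 := by
    rcases eq_or_ne g 0 with hg | hg
    · exact ⟨0, by simp [hg], by simpa [he] using hbound e⟩
    have hρ : 0 < √(B g g) := Real.sqrt_pos.mpr (hpos g hg)
    refine ⟨T e e ((√(B g g))⁻¹ • g), by simp [hρ.ne'], ?_⟩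
    refine sq_trilinear_add_sq_le_of_orthonormal hT₁₂ hT₂₃ hB hbound he ?_ (by simp [heg])
    simp only [map_smul, LinearMap.smul_apply, smul_eq_mul]
    field_simp
    exact (Real.sq_sqrt (hnonneg g)).symm
  calc T e e x ^ 2 = (B e x * T e e e + √(B g g) * b) ^ 2 := by rw [← hb, hTg]; ring
    _ ≤ (B e x ^ 2 + √(B g g) ^ 2) * (T e e e ^ 2 + b ^ 2) := by
      nlinarith [sq_nonneg (B e x * b - √(B g g) * T e e e)]
    _ ≤ B x x * τ ^ 2 := by
      rw [Real.sq_sqrt (hnonneg g), hBg, add_sub_cancel]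
      exact mul_le_mul_of_nonneg_left hsq (hnonneg x)
    _ = τ ^ 2 * B x x := mul_comm _ _

theorem sq_trilinear_le_of_posDef (hT₁₂ : ∀ x y z, T x y z = T y x z)
    (hT₂₃ : ∀ x y z, T x y z = T x z y) (hB : B.IsSymm) (hpos : ∀ w, w ≠ 0 → 0 < B w w)
    (hbound : ∀ w, T w w w ^ 2 ≤ τ ^ 2 * B w w ^ 3) (u v : V) :
    T u v v ^ 2 ≤ τ ^ 2 * B u u * B v v ^ 2 := by
  rcases eq_or_ne v 0 with rfl | hv
  · simp
  set a := √(B v v)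
  have ha2 : a ^ 2 = B v v := Real.sq_sqrt (hpos v hv).le
  have ha : a ≠ 0 := (Real.sqrt_pos.mpr (hpos v hv)).ne'
  have he : B (a⁻¹ • v) (a⁻¹ • v) = 1 := by
    simp only [map_smul, LinearMap.smul_apply, smul_eq_mul]
    field_simp
    exact ha2.symm
  have hTuvv : T u v v = a ^ 2 * T (a⁻¹ • v) (a⁻¹ • v) u := by
    simp only [map_smul, LinearMap.smul_apply, smul_eq_mul]
    field_simp
    rw [hT₁₂, hT₂₃]
  calc T u v v ^ 2 = a ^ 4 * T (a⁻¹ • v) (a⁻¹ • v) u ^ 2 := by rw [hTuvv]; ring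
    _ ≤ a ^ 4 * (τ ^ 2 * B u u) := by
      gcongr
      exact sq_trilinear_le_of_unit hT₁₂ hT₂₃ hB hpos hbound he u
    _ = τ ^ 2 * B u u * B v v ^ 2 := by rw [← ha2]; ring

theorem sq_trilinear_le (hT₁₂ : ∀ x y z, T x y z = T y x z)
    (hT₂₃ : ∀ x y z, T x y z = T x z y) (hB : B.IsSymm) (hB₀ : ∀ w, 0 ≤ B w w)
    {D : LinearMap.BilinForm ℝ V} (hD : D.IsSymm) (hDpos : ∀ w, w ≠ 0 → 0 < D w w)
    (hbound : ∀ w, T w w w ^ 2 ≤ τ ^ 2 * B w w ^ 3) (u v : V) :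
    T u v v ^ 2 ≤ τ ^ 2 * B u u * B v v ^ 2 := by
  have hD₀ : ∀ w, 0 ≤ D w w := fun w => by
    rcases eq_or_ne w 0 with rfl | hw
    · simp
    · exact (hDpos w hw).le
  have hε : ∀ ε : ℝ, 0 < ε →
      T u v v ^ 2 ≤ τ ^ 2 * (B u u + ε * D u u) * (B v v + ε * D v v) ^ 2 := fun ε hε => by
    have hBε : (B + ε • D).IsSymm := ⟨fun x y => by simp [hB.eq x y, hD.eq x y]⟩
    have hposε : ∀ w, w ≠ 0 → 0 < (B + ε • D) w w := fun w hw => by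
      simpa using add_pos_of_nonneg_of_pos (hB₀ w) (mul_pos hε (hDpos w hw))
    have hboundε : ∀ w, T w w w ^ 2 ≤ τ ^ 2 * (B + ε • D) w w ^ 3 := fun w => by
      refine (hbound w).trans (mul_le_mul_of_nonneg_left ?_ (sq_nonneg τ))
      simpa using pow_le_pow_left₀ (hB₀ w) (le_add_of_nonneg_right (mul_nonneg hε.le (hD₀ w))) 3
    simpa using sq_trilinear_le_of_posDef hT₁₂ hT₂₃ hBε hposε hboundε u v
  have hlim : Filter.Tendsto (fun ε => τ ^ 2 * (B u u + ε * D u u) * (B v v + ε * D v v) ^ 2)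
      (nhdsWithin 0 (Set.Ioi 0)) (nhds (τ ^ 2 * B u u * B v v ^ 2)) :=
    ((by fun_prop : Continuous fun ε : ℝ =>
        τ ^ 2 * (B u u + ε * D u u) * (B v v + ε * D v v) ^ 2).tendsto' 0 _
      (by simp)).mono_left nhdsWithin_le_nhds
  exact ge_of_tendsto hlim (eventually_nhdsWithin_of_forall hε)

end LinearMap

namespace Matrix

variable {n : Type*} [Fintype n]

theorem sum_diag_sq_le_trace_transpose_mul_self (A : Matrix n n ℝ) :
    ∑ i, A i i ^ 2 ≤ (Aᵀ * A).trace := by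
  simp only [trace, diag_apply, mul_apply, transpose_apply, ← sq]
  exact sum_le_sum fun j _ =>
    single_le_sum (f := fun i => A i j ^ 2) (fun i _ => sq_nonneg _) (mem_univ j)

theorem trace_transpose_mul_self_conj [DecidableEq n] {U : Matrix n n ℝ} (hU : U * Uᵀ = 1)
    (A : Matrix n n ℝ) : ((Uᵀ * A * U)ᵀ * (Uᵀ * A * U)).trace = (Aᵀ * A).trace := by
  calc ((Uᵀ * A * U)ᵀ * (Uᵀ * A * U)).trace = (Uᵀ * (Aᵀ * (U * Uᵀ) * A) * U).trace := by
        simp only [transpose_mul, transpose_transpose, Matrix.mul_assoc]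
    _ = (Aᵀ * A).trace := by
        rw [hU, Matrix.mul_one, trace_mul_cycle, ← Matrix.mul_assoc, hU, Matrix.one_mul]

theorem trace_transpose_mul_self_le_of_sq_le [DecidableEq n] {M P : Matrix n n ℝ} (hM : M.IsSymm)
    {c : ℝ} (hc : 0 ≤ c) (h : ∀ v, (v ⬝ᵥ M *ᵥ v) ^ 2 ≤ c * (v ⬝ᵥ P *ᵥ v) ^ 2) :
    (Mᵀ * M).trace ≤ c * (Pᵀ * P).trace := by
  have hH : M.IsHermitian := isHermitian_iff_isSymm.mpr hM
  set U : Matrix n n ℝ := ↑hH.eigenvectorUnitary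
  have hU : U * Uᵀ = 1 := by
    simpa [star_eq_conjTranspose] using mem_unitaryGroup_iff.mp hH.eigenvectorUnitary.2
  have hdiag : Uᵀ * M * U = diagonal hH.eigenvalues := by
    simpa [Unitary.conjStarAlgAut_star_apply, star_eq_conjTranspose] using
      hH.conjStarAlgAut_star_eigenvectorUnitary
  calc (Mᵀ * M).trace = ((Uᵀ * M * U)ᵀ * (Uᵀ * M * U)).trace :=
        (trace_transpose_mul_self_conj hU M).symm
    _ = ∑ m, ((Uᵀ * M * U) m m) ^ 2 := by rw [hdiag]; simp [sq]
    _ ≤ ∑ m, c * ((Uᵀ * P * U) m m) ^ 2 := sum_le_sum fun m _ => by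
        simpa only [mul_mul_apply, transpose_transpose] using h (Uᵀ m)
    _ ≤ c * ((Uᵀ * P * U)ᵀ * (Uᵀ * P * U)).trace := by
        rw [← mul_sum]
        exact mul_le_mul_of_nonneg_left (sum_diag_sq_le_trace_transpose_mul_self _) hc
    _ = c * (Pᵀ * P).trace := by rw [trace_transpose_mul_self_conj hU]

theorem dotProduct_transpose_mul_mulVec {m : Type*} [Fintype m] (A : Matrix m n ℝ)
    (x y : n → ℝ) : x ⬝ᵥ (Aᵀ * A) *ᵥ y = A *ᵥ x ⬝ᵥ A *ᵥ y := by
  rw [← mulVec_mulVec, dotProduct_mulVec, vecMul_transpose]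

end Matrix

section TrilinearOfArray

variable {ι : Type*} [Fintype ι]

theorem isSymm_sum_smul_of {T : ι → ι → ι → ℝ} (h : ∀ i j k, T i j k = T i k j) (u : ι → ℝ) :
    (∑ i, u i • Matrix.of fun j k => T i j k).IsSymm :=
  IsSymm.ext fun j k => by simp [Matrix.sum_apply, h _ j k]

variable [DecidableEq ι]

noncomputable def trilinearOfArray (T : ι → ι → ι → ℝ) :
    (ι → ℝ) →ₗ[ℝ] (ι → ℝ) →ₗ[ℝ] (ι → ℝ) →ₗ[ℝ] ℝ :=
  Matrix.toBilin'.toLinearMap ∘ₗ Fintype.linearCombination ℝ fun i => Matrix.of (T i)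

theorem trilinearOfArray_apply (T : ι → ι → ι → ℝ) (u v w : ι → ℝ) :
    trilinearOfArray T u v w = v ⬝ᵥ (∑ i, u i • Matrix.of fun j k => T i j k) *ᵥ w :=
  Matrix.toBilin'_apply' _ _ _

theorem trilinearOfArray_apply_eq_sum (T : ι → ι → ι → ℝ) (u v w : ι → ℝ) :
    trilinearOfArray T u v w = ∑ i, ∑ j, ∑ k, T i j k * u i * v j * w k := by
  simp only [trilinearOfArray, LinearMap.comp_apply, LinearEquiv.coe_coe, Matrix.toBilin'_apply,
    Fintype.linearCombination_apply, Matrix.sum_apply, Matrix.smul_apply, of_apply, smul_eq_mul,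
    sum_mul, mul_sum]
  refine (sum_congr rfl fun j _ => sum_comm).trans (sum_comm.trans ?_)
  exact sum_congr rfl fun i _ => sum_congr rfl fun j _ => sum_congr rfl fun k _ => by ring

theorem trilinearOfArray_swap₁₂ {T : ι → ι → ι → ℝ} (h : ∀ i j k, T i j k = T j i k)
    (x y z : ι → ℝ) : trilinearOfArray T x y z = trilinearOfArray T y x z := by
  rw [trilinearOfArray_apply_eq_sum, trilinearOfArray_apply_eq_sum, sum_comm]
  exact sum_congr rfl fun i _ => sum_congr rfl fun j _ => sum_congr rfl fun k _ => by
    rw [h]; ring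

theorem trilinearOfArray_swap₂₃ {T : ι → ι → ι → ℝ} (h : ∀ i j k, T i j k = T i k j)
    (x y z : ι → ℝ) : trilinearOfArray T x y z = trilinearOfArray T x z y := by
  rw [trilinearOfArray_apply_eq_sum, trilinearOfArray_apply_eq_sum]
  refine sum_congr rfl fun i _ => ?_
  rw [sum_comm]
  exact sum_congr rfl fun j _ => sum_congr rfl fun k _ => by rw [h]; ring

end TrilinearOfArray

theorem euclNorm_sq {p : ℕ} (v : Fin p → ℝ) : euclNorm v ^ 2 = v ⬝ᵥ v := by
  rw [euclNorm, Real.sq_sqrt (sum_nonneg fun i _ => sq_nonneg _)]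
  simp [dotProduct, sq]

theorem sq_dotProduct_slice_mulVec_le {p : ℕ} {T : Fin p → Fin p → Fin p → ℝ}
    (hsym : ∀ i j k, T i j k = T j i k ∧ T i j k = T i k j) {Γ : Matrix (Fin p) (Fin p) ℝ}
    {τ : ℝ} (hT : ∀ u, |∑ i, ∑ j, ∑ k, T i j k * u i * u j * u k| ≤ τ * euclNorm (Γ *ᵥ u) ^ 3)
    (u v : Fin p → ℝ) :
    (v ⬝ᵥ (∑ i, u i • Matrix.of fun j k => T i j k) *ᵥ v) ^ 2 ≤
      τ ^ 2 * euclNorm (Γ *ᵥ u) ^ 2 * (v ⬝ᵥ (Γᵀ * Γ) *ᵥ v) ^ 2 := by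
  have hB : ∀ x y, toBilin' (Γᵀ * Γ) x y = Γ *ᵥ x ⬝ᵥ Γ *ᵥ y := fun x y => by
    rw [toBilin'_apply', dotProduct_transpose_mul_mulVec]
  have hbound : ∀ w, trilinearOfArray T w w w ^ 2 ≤ τ ^ 2 * toBilin' (Γᵀ * Γ) w w ^ 3 := fun w => by
    rw [trilinearOfArray_apply_eq_sum, hB, ← euclNorm_sq, ← sq_abs]
    calc _ ≤ (τ * euclNorm (Γ *ᵥ w) ^ 3) ^ 2 := pow_le_pow_left₀ (abs_nonneg _) (hT w) 2
      _ = _ := by ring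
  have := LinearMap.sq_trilinear_le (trilinearOfArray_swap₁₂ fun i j k => (hsym i j k).1)
    (trilinearOfArray_swap₂₃ fun i j k => (hsym i j k).2)
    ⟨fun x y => by rw [hB, hB, dotProduct_comm]⟩
    (fun w => by rw [hB]; exact dotProduct_self_star_nonneg _)
    (D := dotProductBilin ℝ ℝ) ⟨fun x y => dotProduct_comm x y⟩
    (fun w hw => by simpa using dotProduct_star_self_pos_iff.mpr hw) hbound u v
  rwa [trilinearOfArray_apply, hB, ← euclNorm_sq, toBilin'_apply'] at this

theorem tensor_slice_frobenius_bound_general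
    (p : ℕ) (T : Fin p → Fin p → Fin p → ℝ)
    (hsym : ∀ i j k, T i j k = T j i k ∧ T i j k = T i k j)
    (Γ : Matrix (Fin p) (Fin p) ℝ) (hΓ : Γ.IsSymm) (τ : ℝ)
    (hT : ∀ u : Fin p → ℝ,
      |∑ i, ∑ j, ∑ k, T i j k * u i * u j * u k| ≤ τ * euclNorm (Γ.mulVec u) ^ 3) :
    ∀ u : Fin p → ℝ,
      ((∑ i, u i • Matrix.of fun j k : Fin p => T i j k)ᵀ
          * ∑ i, u i • Matrix.of fun j k : Fin p => T i j k).trace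
        ≤ τ ^ 2 * euclNorm (Γ.mulVec u) ^ 2 * (Γ ^ 4).trace := by
  intro u
  calc _ ≤ τ ^ 2 * euclNorm (Γ *ᵥ u) ^ 2 * ((Γᵀ * Γ)ᵀ * (Γᵀ * Γ)).trace :=
        trace_transpose_mul_self_le_of_sq_le (isSymm_sum_smul_of (fun i j k => (hsym i j k).2) u)
          (by positivity) (sq_dotProduct_slice_mulVec_le hsym hT u)
    _ = τ ^ 2 * euclNorm (Γ *ᵥ u) ^ 2 * (Γ ^ 4).trace := by
        rw [transpose_mul, transpose_transpose, hΓ.eq, ← sq, ← sq, ← pow_mul]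

/-- If the symmetric 3-tensor `T` satisfies condition (Γ), then for every
`u ∈ ℝ^p` it holds `‖T[u]‖_Fr² ≤ τ² ‖Γu‖² tr(Γ⁴)`, where `T[u] = ∑ i, u i • T_i` and
`‖A‖_Fr² = tr(AᵀA)`. -/
theorem tensor_slice_frobenius_bound
    (p : ℕ) (T : Fin p → Fin p → Fin p → ℝ)
    (hsym : ∀ i j k, T i j k = T j i k ∧ T i j k = T i k j)
    (Γ : Matrix (Fin p) (Fin p) ℝ) (hΓ : Γ.IsSymm) (τ : ℝ) (hτ : 0 < τ)
    (hT : ∀ u : Fin p → ℝ,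
      |∑ i, ∑ j, ∑ k, T i j k * u i * u j * u k| ≤ τ * euclNorm (Γ.mulVec u) ^ 3) :
    ∀ u : Fin p → ℝ,
      ((∑ i, u i • Matrix.of fun j k : Fin p => T i j k)ᵀ
          * ∑ i, u i • Matrix.of fun j k : Fin p => T i j k).trace
        ≤ τ ^ 2 * euclNorm (Γ.mulVec u) ^ 2 * (Γ ^ 4).trace :=
  tensor_slice_frobenius_bound_general p T hsym Γ hΓ τ hT
end
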